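/- Let S_5^{(3)} be the 3-uniform star with 5 edges: five edges all containing one common vertex and otherwise pairwise disjoint. Then ρ(S_5^{(3)}) > 2·(2+√5)^{1/3}; consequently, every connected 3-uniform hypergraph containing a vertex of degree at least 5 has spectral radius strictly greater than 2·(2+√5)^{1/3}. -/

import Mathlib

open Finset

/-- A hypergraph on vertex type `V`, given by its finite set of edges. -/
structure FinsetHypergraph (V : Type) [DecidableEq V] where
  edges : Finset (Finset V)

namespace FinsetHypergraph

variable {V : Type} [DecidableEq V]

/-- The vertex set of `H`: all vertices lying in some edge. -/
def vertexSet (H : FinsetHypergraph V) : Finset V := H.edges.biUnion id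

/-- `H` is `r`-uniform: every edge has exactly `r` vertices. -/
def IsUniform (H : FinsetHypergraph V) (r : ℕ) : Prop := ∀ e ∈ H.edges, e.card = r

/-- The degree of a vertex: the number of edges containing it. -/
def degree (H : FinsetHypergraph V) (v : V) : ℕ := (H.edges.filter fun e => v ∈ e).card

/-- The spectral radius of an `r`-uniform hypergraph `H`:
`ρ(H) = r! · max{ (∑_{e ∈ E} ∏_{v ∈ e} x_v) / (∑_v x_v ^ r) : x ≥ 0, x ≠ 0 }`. -/
noncomputable def spectralRadius (H : FinsetHypergraph V) (r : ℕ) : ℝ :=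
  (Nat.factorial r : ℝ) *
    sSup {t : ℝ | ∃ x : V → ℝ, (∀ v, 0 ≤ x v) ∧ (∃ v ∈ H.vertexSet, x v ≠ 0) ∧
      t = (∑ e ∈ H.edges, ∏ v ∈ e, x v) / (∑ v ∈ H.vertexSet, x v ^ r)}

/-- `v, e` form a walk `v 0, e 0, v 1, e 1, …, e (l-1), v l` in `H`. -/
def IsWalkSeq (H : FinsetHypergraph V) {l : ℕ} (v : Fin (l + 1) → V) (e : Fin l → Finset V) : Prop :=
  ∀ i : Fin l, e i ∈ H.edges ∧ v i.castSucc ∈ e i ∧ v i.succ ∈ e i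

/-- `H` is connected: every two vertices are joined by a walk. -/
def Connected (H : FinsetHypergraph V) : Prop :=
  ∀ u ∈ H.vertexSet, ∀ w ∈ H.vertexSet,
    ∃ (l : ℕ) (v : Fin (l + 1) → V) (e : Fin l → Finset V),
      H.IsWalkSeq v e ∧ v 0 = u ∧ v (Fin.last l) = w

/-- The cyclic successor on `Fin l`. -/
def cyc {l : ℕ} (i : Fin l) : Fin l := ⟨((i : ℕ) + 1) % l, Nat.mod_lt _ i.pos⟩

/-- `v, e` form a cycle `v 0, e 0, v 1, e 1, …, e (l-1), v 0` of length `l` in `H`,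
with all vertices and all edges distinct. -/
def IsCycleSeq (H : FinsetHypergraph V) {l : ℕ} (v : Fin l → V) (e : Fin l → Finset V) : Prop :=
  Function.Injective v ∧ Function.Injective e ∧
    ∀ i : Fin l, e i ∈ H.edges ∧ v i ∈ e i ∧ v (cyc i) ∈ e i

/-- `H` contains a cycle. -/
def HasCycle (H : FinsetHypergraph V) : Prop :=
  ∃ l : ℕ, 2 ≤ l ∧ ∃ (v : Fin l → V) (e : Fin l → Finset V), H.IsCycleSeq v e

/-- A hypertree: connected and acyclic. -/
def IsHypertree (H : FinsetHypergraph V) : Prop := H.Connected ∧ ¬H.HasCycle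

/-- `H` is irreducible: some edge has all of its vertices of degree at least `2`. -/
def Irreducible (H : FinsetHypergraph V) : Prop := ∃ e ∈ H.edges, ∀ v ∈ e, 2 ≤ H.degree v

/-- The `r`-uniform edge-star `S_r^{(r)}`: edges `F_0 = {v 0, …, v (r-1)}` and
`F_1, …, F_r` with `F_i ∩ F_0 = {v i}` and `F_i ∩ F_j = ∅` for `i ≠ j`. -/
def IsEdgeStar (H : FinsetHypergraph V) (r : ℕ) : Prop :=
  H.IsUniform r ∧
    ∃ (v : Fin r → V) (F : Fin r → Finset V),
      Function.Injective v ∧ Finset.univ.image v ∈ H.edges ∧ (∀ i, F i ∈ H.edges) ∧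
      (∀ i, F i ∩ Finset.univ.image v = {v i}) ∧
      (∀ i j, i ≠ j → F i ∩ F j = ∅) ∧
      H.edges = insert (Finset.univ.image v) (Finset.univ.image F)

/-- The `r`-uniform star with `k` edges: `k` edges through a common vertex `u`,
otherwise pairwise disjoint. -/
def IsStar (H : FinsetHypergraph V) (r k : ℕ) : Prop :=
  H.IsUniform r ∧
    ∃ (u : V) (F : Fin k → Finset V),
      Function.Injective F ∧ (∀ i, F i ∈ H.edges) ∧ (∀ i, u ∈ F i) ∧
      (∀ i j, i ≠ j → F i ∩ F j = {u}) ∧ H.edges = Finset.univ.image F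

/-- `S^{(3)}_{4+}`: four 3-edges through a common vertex `u` (otherwise pairwise
disjoint) plus a fifth edge meeting exactly one of them in exactly one vertex `w ≠ u`
and disjoint from the other three. -/
def IsS34plus (H : FinsetHypergraph V) : Prop :=
  H.IsUniform 3 ∧
    ∃ (u w : V) (F : Fin 4 → Finset V) (g : Finset V),
      Function.Injective F ∧ (∀ i, F i ∈ H.edges) ∧ g ∈ H.edges ∧
      (∀ i, u ∈ F i) ∧ (∀ i j, i ≠ j → F i ∩ F j = {u}) ∧
      w ≠ u ∧ w ∈ F 0 ∧ g ∩ F 0 = {w} ∧ (∀ i, i ≠ 0 → g ∩ F i = ∅) ∧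
      H.edges = insert g (Finset.univ.image F)

end FinsetHypergraph

open FinsetHypergraph

section Aux

private lemma amgm3 (a b c : ℝ) (ha : 0 ≤ a) (hb : 0 ≤ b) (hc : 0 ≤ c) :
    a * b * c ≤ a ^ 3 + b ^ 3 + c ^ 3 := by
  nlinarith [sq_nonneg (a-b), sq_nonneg (b-c), sq_nonneg (a-c), sq_nonneg (a+b+c),
    mul_nonneg ha hb, mul_nonneg hb hc, mul_nonneg ha hc]

private lemma cube_root_five_cubed : ((5:ℝ) ^ ((1:ℝ)/3)) ^ (3:ℕ) = 5 := by
  rw [← Real.rpow_natCast ((5:ℝ) ^ ((1:ℝ)/3)) 3, ← Real.rpow_mul (by norm_num)]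
  norm_num

private lemma target_lt : (2 + Real.sqrt 5) ^ ((1:ℝ)/3) < (5:ℝ) ^ ((1:ℝ)/3) := by
  apply Real.rpow_lt_rpow (by positivity) _ (by norm_num)
  nlinarith [Real.sq_sqrt (by norm_num : (5:ℝ) ≥ 0), Real.sqrt_nonneg 5]

private lemma hg_bddAbove {V : Type} [DecidableEq V] (H : FinsetHypergraph V)
    (hU : H.IsUniform 3) :
    BddAbove {t : ℝ | ∃ x : V → ℝ, (∀ v, 0 ≤ x v) ∧ (∃ v ∈ H.vertexSet, x v ≠ 0) ∧
      t = (∑ e ∈ H.edges, ∏ v ∈ e, x v) / (∑ v ∈ H.vertexSet, x v ^ 3)} := by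
  use (H.edges.card : ℝ)
  rintro s ⟨x, hx0, ⟨v0, hv0, hxv0⟩, rfl⟩
  have hDpos : 0 < ∑ v ∈ H.vertexSet, x v ^ 3 := by
    have h1 : 0 < x v0 ^ 3 := pow_pos (lt_of_le_of_ne (hx0 v0) (Ne.symm hxv0)) 3
    exact lt_of_lt_of_le h1 (Finset.single_le_sum (fun v _ => pow_nonneg (hx0 v) 3) hv0)
  rw [div_le_iff₀ hDpos]
  have hedge : ∀ e ∈ H.edges, ∏ v ∈ e, x v ≤ ∑ v ∈ H.vertexSet, x v ^ 3 := by
    intro e he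
    obtain ⟨a, b, c, hab, hac, hbc, rfl⟩ := Finset.card_eq_three.mp (hU e he)
    have hsub : ({a,b,c} : Finset V) ⊆ H.vertexSet := fun v hv =>
      Finset.mem_biUnion.mpr ⟨{a,b,c}, he, hv⟩
    have hprod : ∏ v ∈ ({a,b,c} : Finset V), x v = x a * x b * x c := by
      rw [Finset.prod_insert (by simp [hab, hac]), Finset.prod_insert (by simp [hbc]),
        Finset.prod_singleton, mul_assoc]
    have hsum : x a ^ 3 + x b ^ 3 + x c ^ 3 ≤ ∑ v ∈ H.vertexSet, x v ^ 3 := by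
      have h := Finset.sum_le_sum_of_subset_of_nonneg hsub
        (fun v _ _ => pow_nonneg (hx0 v) 3)
      rwa [Finset.sum_insert (by simp [hab, hac]), Finset.sum_insert (by simp [hbc]),
        Finset.sum_singleton, ← add_assoc] at h
    rw [hprod]
    exact le_trans (amgm3 _ _ _ (hx0 a) (hx0 b) (hx0 c)) hsum
  calc ∑ e ∈ H.edges, ∏ v ∈ e, x v ≤ ∑ _e ∈ H.edges, ∑ v ∈ H.vertexSet, x v ^ 3 :=
        Finset.sum_le_sum hedge
    _ = (H.edges.card : ℝ) * ∑ v ∈ H.vertexSet, x v ^ 3 := by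
        rw [Finset.sum_const, nsmul_eq_mul]

private lemma deg_five_lt {V : Type} [DecidableEq V] (H : FinsetHypergraph V)
    (hU : H.IsUniform 3) (u : V) (hd : 5 ≤ H.degree u) :
    2 * (2 + Real.sqrt 5) ^ ((1 : ℝ) / 3) < H.spectralRadius 3 := by
  classical
  set t : ℝ := (5:ℝ) ^ ((1:ℝ)/3) with ht_def
  have ht0 : 0 < t := Real.rpow_pos_of_pos (by norm_num) _
  have ht3 : t ^ (3:ℕ) = 5 := cube_root_five_cubed
  obtain ⟨T, hTsub, hTcard⟩ := Finset.exists_subset_card_eq hd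
  have hT : ∀ e ∈ T, e ∈ H.edges ∧ u ∈ e := fun e he => Finset.mem_filter.mp (hTsub he)
  have hTE : T ⊆ H.edges := fun e he => (hT e he).1
  have hTne : T.Nonempty := Finset.card_pos.mp (by rw [hTcard]; norm_num)
  obtain ⟨e0, he0⟩ := hTne
  have huV : u ∈ H.vertexSet := Finset.mem_biUnion.mpr ⟨e0, (hT e0 he0).1, (hT e0 he0).2⟩
  set S : Finset V := T.biUnion id with hS
  set B : Finset V := T.biUnion (fun e => e.erase u) with hB
  have huB : u ∉ B := by simp [hB]
  have hSsub : S ⊆ insert u B := by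
    intro v hv
    obtain ⟨e, he, hve⟩ := Finset.mem_biUnion.mp hv
    by_cases hvu : v = u
    · simp [hvu]
    · exact Finset.mem_insert_of_mem
        (Finset.mem_biUnion.mpr ⟨e, he, Finset.mem_erase.mpr ⟨hvu, hve⟩⟩)
  have hBcard : (B.card : ℝ) ≤ 10 := by
    have h1 : B.card ≤ ∑ e ∈ T, (e.erase u).card := Finset.card_biUnion_le
    have h2 : ∀ e ∈ T, (e.erase u).card = 2 := fun e he => by
      rw [Finset.card_erase_of_mem (hT e he).2, hU e (hT e he).1]
    have h3 : B.card ≤ 10 := by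
      calc B.card ≤ ∑ e ∈ T, (e.erase u).card := h1
        _ = ∑ _e ∈ T, 2 := Finset.sum_congr rfl h2
        _ = 10 := by rw [Finset.sum_const, hTcard]; norm_num
    exact_mod_cast h3
  set x : V → ℝ := fun v => if v = u then t else if v ∈ S then 1 else 0 with hx
  have hx0 : ∀ v, 0 ≤ x v := by
    intro v; rw [hx]; dsimp only
    split_ifs <;> first | exact ht0.le | norm_num
  have hxu : x u = t := by simp [hx]
  have hxle1 : ∀ v, v ≠ u → x v ≤ 1 := by
    intro v hv; rw [hx]; dsimp only
    split_ifs with h1 h2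
    · exact absurd h1 hv
    · exact le_refl 1
    · norm_num
  -- numerator bound
  have hprodT : ∀ e ∈ T, ∏ v ∈ e, x v = t := by
    intro e he
    rw [← Finset.mul_prod_erase e x (hT e he).2, hxu]
    have h1 : ∏ v ∈ e.erase u, x v = 1 := by
      apply Finset.prod_eq_one
      intro v hv
      have hvu : v ≠ u := (Finset.mem_erase.mp hv).1
      have hvS : v ∈ S := Finset.mem_biUnion.mpr ⟨e, he, (Finset.mem_erase.mp hv).2⟩
      simp [hx, hvu, hvS]
    rw [h1, mul_one]
  have h5t : 5 * t ≤ ∑ e ∈ H.edges, ∏ v ∈ e, x v := by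
    have h1 : ∑ e ∈ T, ∏ v ∈ e, x v = 5 * t := by
      rw [Finset.sum_congr rfl hprodT, Finset.sum_const, hTcard, nsmul_eq_mul]
      norm_num
    rw [← h1]
    exact Finset.sum_le_sum_of_subset_of_nonneg hTE
      (fun e _ _ => Finset.prod_nonneg fun v _ => hx0 v)
  -- denominator bounds
  have hDle : ∑ v ∈ H.vertexSet, x v ^ 3 ≤ 15 := by
    have hzero : ∀ v ∈ H.vertexSet, v ∉ H.vertexSet ∩ insert u B → x v ^ 3 = 0 := by
      intro v hv hv'
      have hvnot : v ∉ insert u B := fun h => hv' (Finset.mem_inter.mpr ⟨hv, h⟩)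
      have hvu : v ≠ u := fun h => hvnot (by simp [h])
      have hvS : v ∉ S := fun h => hvnot (hSsub h)
      simp [hx, hvu, hvS]
    rw [← Finset.sum_subset Finset.inter_subset_left hzero]
    have h1 : ∑ v ∈ H.vertexSet ∩ insert u B, x v ^ 3 ≤ ∑ v ∈ insert u B, x v ^ 3 :=
      Finset.sum_le_sum_of_subset_of_nonneg Finset.inter_subset_right
        (fun v _ _ => pow_nonneg (hx0 v) 3)
    have h2 : ∑ v ∈ insert u B, x v ^ 3 ≤ 15 := by
      rw [Finset.sum_insert huB, hxu, ht3]
      have h3 : ∑ v ∈ B, x v ^ 3 ≤ ∑ _v ∈ B, (1:ℝ) := by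
        apply Finset.sum_le_sum
        intro v hv
        have hvu : v ≠ u := fun h => huB (h ▸ hv)
        exact pow_le_one₀ (hx0 v) (hxle1 v hvu)
      rw [Finset.sum_const, nsmul_eq_mul, mul_one] at h3
      linarith
    linarith
  have hDpos : 0 < ∑ v ∈ H.vertexSet, x v ^ 3 := by
    have h1 : 0 < x u ^ 3 := by rw [hxu, ht3]; norm_num
    exact lt_of_lt_of_le h1 (Finset.single_le_sum (fun v _ => pow_nonneg (hx0 v) 3) huV)
  -- ratio bound
  have hratio : t / 3 ≤ (∑ e ∈ H.edges, ∏ v ∈ e, x v) / (∑ v ∈ H.vertexSet, x v ^ 3) := by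
    rw [div_le_div_iff₀ (by norm_num) hDpos]
    nlinarith [h5t, hDle, ht0.le, hDpos]
  have hmem : (∑ e ∈ H.edges, ∏ v ∈ e, x v) / (∑ v ∈ H.vertexSet, x v ^ 3) ∈
      {s : ℝ | ∃ y : V → ℝ, (∀ v, 0 ≤ y v) ∧ (∃ v ∈ H.vertexSet, y v ≠ 0) ∧
        s = (∑ e ∈ H.edges, ∏ v ∈ e, y v) / (∑ v ∈ H.vertexSet, y v ^ 3)} :=
    ⟨x, hx0, ⟨u, huV, by rw [hxu]; exact ne_of_gt ht0⟩, rfl⟩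
  have hsup : t / 3 ≤ sSup {s : ℝ | ∃ y : V → ℝ, (∀ v, 0 ≤ y v) ∧
      (∃ v ∈ H.vertexSet, y v ≠ 0) ∧
      s = (∑ e ∈ H.edges, ∏ v ∈ e, y v) / (∑ v ∈ H.vertexSet, y v ^ 3)} :=
    le_trans hratio (le_csSup (hg_bddAbove H hU) hmem)
  have hfact : ((Nat.factorial 3 : ℕ) : ℝ) = 6 := by norm_num [Nat.factorial]
  rw [FinsetHypergraph.spectralRadius, hfact]
  have h2t : 2 * (2 + Real.sqrt 5) ^ ((1:ℝ)/3) < 2 * t := by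
    have := target_lt; rw [ht_def]; linarith
  linarith [hsup, h2t]

end Aux

/-- The 3-uniform star with 5 edges has spectral radius greater than `2·(2+√5)^{1/3}`;
consequently every connected 3-uniform hypergraph with a vertex of degree at least 5 has
spectral radius greater than `2·(2+√5)^{1/3}`. -/
theorem star_five_spectralRadius_gt {V : Type} [DecidableEq V] :
    (∀ H : FinsetHypergraph V, H.IsStar 3 5 →
      2 * (2 + Real.sqrt 5) ^ ((1 : ℝ) / 3) < H.spectralRadius 3) ∧
    (∀ H : FinsetHypergraph V, H.IsUniform 3 → H.Connected → (∃ v, 5 ≤ H.degree v) →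
      2 * (2 + Real.sqrt 5) ^ ((1 : ℝ) / 3) < H.spectralRadius 3) := by
  constructor
  · intro H hSt
    obtain ⟨hU, u, F, hFinj, hFmem, huF, hdisj, hedges⟩ := hSt
    have hdeg : 5 ≤ H.degree u := by
      have h1 : H.edges.filter (fun e => u ∈ e) = H.edges := by
        apply Finset.filter_true_of_mem
        intro e he
        rw [hedges] at he
        obtain ⟨i, _, rfl⟩ := Finset.mem_image.mp he
        exact huF i
      have h2 : H.edges.card = 5 := by
        rw [hedges, Finset.card_image_of_injective _ hFinj, Finset.card_univ,
          Fintype.card_fin]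
      rw [FinsetHypergraph.degree, h1, h2]
    exact deg_five_lt H hU u hdeg
  · rintro H hU _ ⟨u, hd⟩
    exact deg_five_lt H hU u hd
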